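/- arXiv:2504.09128 — 5 statements merged into one kernel-verified Lean document; each statement's English description precedes it below -/
import Mathlib

section
/- Let S be a finite partially defined lattice satisfying Whitman's condition (W), in the sense that whenever ⋀U and ⋁V are defined in S and ⋀U ≤ ⋁V, then u ≤ ⋁V for some u ∈ U or ⋀U ≤ v for some v ∈ V. Then S is stable for doubling: for every lattice L, every interval I = [b,a] of L, and every PDL homomorphism r₀ : S → L, there exists a PDL homomorphism r₁ : S → L[I] such that λ ∘ r₁ = r₀, where λ : L[I] → L is the natural map. -/
open FirstOrder

namespace FreeLatticePaper

universe u v w u' v'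

/-- A partially defined lattice (PDL) structure on a partially ordered set `α`:
partial operations assigning to certain finite subsets a join and/or a meet,
which are required to be least upper bounds, resp. greatest lower bounds. -/
structure PDLOps (α : Type u) [PartialOrder α] where
  /-- The partial join operation. -/
  joinOf : Finset α → Part α
  /-- The partial meet operation. -/
  meetOf : Finset α → Part α
  isLUB_joinOf : ∀ (A : Finset α) (c : α), c ∈ joinOf A → IsLUB (↑A : Set α) c
  isGLB_meetOf : ∀ (A : Finset α) (c : α), c ∈ meetOf A → IsGLB (↑A : Set α) c

/-- A PDL homomorphism into a partially ordered set (e.g. a lattice): an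
order-preserving map sending every defined join to the least upper bound of the
image of its arguments, and dually for defined meets. -/
def PDLOps.IsHom {α : Type u} [PartialOrder α] (P : PDLOps α) {β : Type v} [PartialOrder β]
    (h : α → β) : Prop :=
  Monotone h ∧ (∀ (A : Finset α) (c : α), c ∈ P.joinOf A → IsLUB (h '' (↑A : Set α)) (h c)) ∧
    (∀ (A : Finset α) (c : α), c ∈ P.meetOf A → IsGLB (h '' (↑A : Set α)) (h c))

/-- Whitman's condition (W) for a PDL: whenever a meet `⋀U` and a join `⋁V`
are defined and `⋀U ≤ ⋁V`, some `u ∈ U` satisfies `u ≤ ⋁V` or some `v ∈ V`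
satisfies `⋀U ≤ v`. -/
def PDLOps.Whitman {α : Type u} [PartialOrder α] (P : PDLOps α) : Prop :=
  ∀ (U V : Finset α) (u v : α), u ∈ P.meetOf U → v ∈ P.joinOf V → u ≤ v →
    (∃ x ∈ U, x ≤ v) ∨ (∃ y ∈ V, u ≤ y)

/-- The underlying set of the doubling `L[I]` of the interval `I = [b, a]` in
the lattice `L`: an element of `L ∖ I` is tagged with `false`, and each element
of `I` occurs twice, tagged `false` ("lower copy") and `true` ("upper copy"). -/
def Doubled (L : Type u) [Lattice L] (b a : L) : Type u :=
  {p : L × Bool // p.1 ∈ Set.Icc b a ∨ p.2 = false}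

namespace Doubled

variable {L : Type u} [Lattice L] {b a : L}

instance instPartialOrder : PartialOrder (Doubled L b a) where
  le x y := x.1.1 ≤ y.1.1 ∧ (x.1.1 ∈ Set.Icc b a → y.1.1 ∈ Set.Icc b a → x.1.2 ≤ y.1.2)
  le_refl x := ⟨le_rfl, fun _ _ => le_rfl⟩
  le_trans x y z hxy hyz :=
    ⟨hxy.1.trans hyz.1, fun hx hz => by
      have hy : y.1.1 ∈ Set.Icc b a := ⟨hx.1.trans hxy.1, hyz.1.trans hz.2⟩
      exact (hxy.2 hx hy).trans (hyz.2 hy hz)⟩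
  le_antisymm x y hxy hyx := by
    have h1 : x.1.1 = y.1.1 := le_antisymm hxy.1 hyx.1
    have h2 : x.1.2 = y.1.2 := by
      by_cases hx : x.1.1 ∈ Set.Icc b a
      · have hy : y.1.1 ∈ Set.Icc b a := h1 ▸ hx
        exact le_antisymm (hxy.2 hx hy) (hyx.2 hy hx)
      · have hx2 : x.1.2 = false := x.2.resolve_left hx
        have hy2 : y.1.2 = false := y.2.resolve_left (by rw [← h1]; exact hx)
        rw [hx2, hy2]
    exact Subtype.ext (Prod.ext h1 h2)

/-- The natural projection `λ : L[I] → L`. -/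
def proj : Doubled L b a → L := fun x => x.1.1

end Doubled

/-!
Send `x` to the upper copy of `I` exactly when `x` lies in `T`, the least set of elements over `I`
that is upward closed among the elements over `I` and contains each defined meet `⋀U` over `I`
whose arguments over `I` all lie in `T`. The closure under meets is what makes the lift preserve
defined meets. Defined joins are preserved because a join `⋁V` in `T` has an argument in `T`:
by induction on the generation of `T`, Whitman's condition pushes `x ≤ ⋁V` either down into an
argument of the meet generating `x` or up into an argument of `⋁V`.
-/

namespace PDLOps

variable {α : Type u} [PartialOrder α] (P : PDLOps α) {L : Type v} [Lattice L]

structure IsUpperCopySet (r₀ : α → L) (b a : L) (T : α → Prop) : Prop where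
  mem_Icc : ∀ ⦃x⦄, T x → r₀ x ∈ Set.Icc b a
  of_le : ∀ ⦃x y⦄, T x → x ≤ y → r₀ y ∈ Set.Icc b a → T y
  exists_mem_of_joinOf : ∀ ⦃V c⦄, c ∈ P.joinOf V → T c → ∃ v ∈ V, T v
  of_meetOf : ∀ ⦃U c⦄, c ∈ P.meetOf U → r₀ c ∈ Set.Icc b a →
    (∀ u ∈ U, r₀ u ∈ Set.Icc b a → T u) → T c

inductive UpperCopy (r₀ : α → L) (b a : L) : α → Prop
  | of_le {x y : α} : UpperCopy r₀ b a x → x ≤ y → r₀ y ∈ Set.Icc b a → UpperCopy r₀ b a y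
  | of_meetOf {U : Finset α} {c : α} : c ∈ P.meetOf U → r₀ c ∈ Set.Icc b a →
      (∀ u ∈ U, r₀ u ∈ Set.Icc b a → UpperCopy r₀ b a u) → UpperCopy r₀ b a c

variable {P} {r₀ : α → L} {b a : L}

theorem UpperCopy.mem_Icc {x : α} : P.UpperCopy r₀ b a x → r₀ x ∈ Set.Icc b a
  | .of_le _ _ h => h
  | .of_meetOf _ h _ => h

theorem UpperCopy.exists_mem_of_le_joinOf (hW : P.Whitman) (hr₀ : Monotone r₀) {x : α}
    (hx : P.UpperCopy r₀ b a x) {V : Finset α} {c : α} (hc : c ∈ P.joinOf V) (hxc : x ≤ c)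
    (hcI : r₀ c ∈ Set.Icc b a) : ∃ v ∈ V, P.UpperCopy r₀ b a v := by
  induction hx with
  | of_le _ hle _ ih => exact ih (hle.trans hxc)
  | @of_meetOf U x hU hxI hmem ih =>
    rcases hW U V x c hU hc hxc with ⟨u, huU, huc⟩ | ⟨v, hvV, hxv⟩
    · have huI : r₀ u ∈ Set.Icc b a :=
        ⟨hxI.1.trans (hr₀ ((P.isGLB_meetOf U x hU).1 huU)), (hr₀ huc).trans hcI.2⟩
      exact ih u huU huI huc
    · have hvI : r₀ v ∈ Set.Icc b a :=
        ⟨hxI.1.trans (hr₀ hxv), (hr₀ ((P.isLUB_joinOf V c hc).1 hvV)).trans hcI.2⟩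
      exact ⟨v, hvV, .of_le (.of_meetOf hU hxI hmem) hxv hvI⟩

theorem isUpperCopySet_upperCopy (hW : P.Whitman) (hr₀ : Monotone r₀) :
    P.IsUpperCopySet r₀ b a (P.UpperCopy r₀ b a) where
  mem_Icc _ := UpperCopy.mem_Icc
  of_le _ _ := .of_le
  exists_mem_of_joinOf _ _ hc hcT := hcT.exists_mem_of_le_joinOf hW hr₀ hc le_rfl hcT.mem_Icc
  of_meetOf _ _ := .of_meetOf

end PDLOps

namespace Doubled

variable {α : Type u} [PartialOrder α] {L : Type v} [Lattice L] {b a : L}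

def lift (r₀ : α → L) (T : α → Prop) [DecidablePred T] (hT : ∀ x, T x → r₀ x ∈ Set.Icc b a) :
    α → Doubled L b a :=
  fun x => ⟨(r₀ x, decide (T x)), if h : T x then .inl (hT x h) else .inr (decide_eq_false h)⟩

variable {P : PDLOps α} {r₀ : α → L} {T : α → Prop} [DecidablePred T]

theorem monotone_lift (hr₀ : Monotone r₀) (hT : P.IsUpperCopySet r₀ b a T) :
    Monotone (lift r₀ T hT.mem_Icc) := fun _ _ hxy =>
  ⟨hr₀ hxy, fun _ hyI => Bool.le_iff_imp.2 fun hx =>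
    decide_eq_true (hT.of_le (of_decide_eq_true hx) hxy hyI)⟩

theorem isLUB_lift_joinOf (h₀ : P.IsHom r₀) (hT : P.IsUpperCopySet r₀ b a T) {A : Finset α}
    {c : α} (hc : c ∈ P.joinOf A) :
    IsLUB (lift r₀ T hT.mem_Icc '' ↑A) (lift r₀ T hT.mem_Icc c) := by
  refine ⟨(monotone_lift h₀.1 hT).mem_upperBounds_image (P.isLUB_joinOf A c hc).1, ?_⟩
  intro y hy
  have hproj : y.1.1 ∈ upperBounds (r₀ '' ↑A) := by
    rintro _ ⟨x, hx, rfl⟩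
    exact (hy ⟨x, hx, rfl⟩).1
  refine ⟨(h₀.2.1 A c hc).2 hproj, fun _ hyI => Bool.le_iff_imp.2 fun hcT => ?_⟩
  obtain ⟨v, hvA, hvT⟩ := hT.exists_mem_of_joinOf hc (of_decide_eq_true hcT)
  exact Bool.le_iff_imp.1 ((hy ⟨v, hvA, rfl⟩).2 (hT.mem_Icc hvT) hyI) (decide_eq_true hvT)

theorem isGLB_lift_meetOf (h₀ : P.IsHom r₀) (hT : P.IsUpperCopySet r₀ b a T) {A : Finset α}
    {c : α} (hc : c ∈ P.meetOf A) :
    IsGLB (lift r₀ T hT.mem_Icc '' ↑A) (lift r₀ T hT.mem_Icc c) := by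
  refine ⟨(monotone_lift h₀.1 hT).mem_lowerBounds_image (P.isGLB_meetOf A c hc).1, ?_⟩
  intro y hy
  have hproj : y.1.1 ∈ lowerBounds (r₀ '' ↑A) := by
    rintro _ ⟨x, hx, rfl⟩
    exact (hy ⟨x, hx, rfl⟩).1
  refine ⟨(h₀.2.2 A c hc).2 hproj, fun hyI hcI => Bool.le_iff_imp.2 fun ht => ?_⟩
  refine decide_eq_true (hT.of_meetOf hc hcI fun u huA huI => ?_)
  exact of_decide_eq_true (Bool.le_iff_imp.1 ((hy ⟨u, huA, rfl⟩).2 hyI huI) ht)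

theorem isHom_lift (h₀ : P.IsHom r₀) (hT : P.IsUpperCopySet r₀ b a T) :
    P.IsHom (lift r₀ T hT.mem_Icc) :=
  ⟨monotone_lift h₀.1 hT, fun _ _ => isLUB_lift_joinOf h₀ hT, fun _ _ => isGLB_lift_meetOf h₀ hT⟩

end Doubled

theorem whitman_pdl_stable_for_doubling_general
    {α : Type u} [PartialOrder α] (P : PDLOps α) (hW : P.Whitman)
    (L : Type v) [Lattice L] (b a : L)
    (r₀ : α → L) (h₀ : P.IsHom r₀) :
    ∃ r₁ : α → Doubled L b a, P.IsHom r₁ ∧ Doubled.proj ∘ r₁ = r₀ := by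
  classical
  have hT := PDLOps.isUpperCopySet_upperCopy (b := b) (a := a) hW h₀.1
  exact ⟨_, Doubled.isHom_lift h₀ hT, rfl⟩

/-- A finite partially defined lattice satisfying Whitman's
condition (W) is stable for doubling: every PDL homomorphism into a lattice `L`
lifts along the natural map `λ : L[I] → L`, for any interval `I = [b, a]`. -/
theorem whitman_pdl_stable_for_doubling
    {α : Type u} [PartialOrder α] [Finite α] (P : PDLOps α) (hW : P.Whitman)
    (L : Type v) [Lattice L] (b a : L) (hba : b ≤ a)
    (r₀ : α → L) (h₀ : P.IsHom r₀) :
    ∃ r₁ : α → Doubled L b a, P.IsHom r₁ ∧ Doubled.proj ∘ r₁ = r₀ :=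
  whitman_pdl_stable_for_doubling_general P hW L b a r₀ h₀

end FreeLatticePaper
end

section
/- Let L be a finite lattice and I an interval of L. Then L is bounded if and only if the doubled lattice L[I] is bounded. -/
open FirstOrder

namespace FreeLatticePaper

universe u v w u' v'

/-- `p` is join prime: whenever `p` lies below the least upper bound of a
finite set, it lies below some member of that set. -/
def JoinPrimeIn (α : Type u) [PartialOrder α] (p : α) : Prop :=
  ∀ (A : Finset α) (s : α), IsLUB (↑A : Set α) s → p ≤ s → ∃ a ∈ A, p ≤ a

/-- The sets `D_k`: `D_0` is the set of join primes, and `a ∈ D_{k+1}` if every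
nontrivial join cover of `a` has a refinement contained in `D_k` which is still
a join cover of `a`. -/
def Dset (α : Type u) [PartialOrder α] : ℕ → Set α
  | 0 => {p | JoinPrimeIn α p}
  | (k + 1) => {p | ∀ (A : Finset α) (s : α), IsLUB (↑A : Set α) s → p ≤ s →
      (∀ a ∈ A, ¬ p ≤ a) →
      ∃ (U : Finset α) (t : α), (↑U : Set α) ⊆ Dset α k ∧ (∀ u ∈ U, ∃ a ∈ A, u ≤ a) ∧
        IsLUB (↑U : Set α) t ∧ p ≤ t}

/-- `D(L) = ⋃ₖ D_k(L)`. -/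
def DFull (α : Type u) [PartialOrder α] : Set α := ⋃ k, Dset α k

/-- The dual (meet-side) notion `D^d(L)`. -/
def DdFull (α : Type u) [PartialOrder α] : Set α :=
  {p | OrderDual.toDual p ∈ DFull αᵒᵈ}

/-- A (finite) lattice is bounded if `D(L) = L = D^d(L)`. -/
def IsBoundedLat (α : Type u) [PartialOrder α] : Prop :=
  DFull α = Set.univ ∧ DdFull α = Set.univ


/-!
The projection `proj : L[I] → L` has the lower adjoint `lower v = (v, 0)` and an upper adjoint,
and a map with both adjoints carries each `D_k` into `D_k`. Hence the lower copy of `D(L)` lies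
in `D(L[I])`; the element `(b, 1)` lies in `D(L[I])` by a direct analysis of its join covers; and
since `D` of a finite lattice is closed under joins, every `(u, 1) = (u, 0) ⊔ (b, 1)` lies in it.

Conversely, `lower` carries minimal nontrivial join covers of `L` to minimal nontrivial join covers
of `L[I]`. The members of a minimal nontrivial join cover of an element of `D_{k+1}` lie in `D_k`,
and every nontrivial join cover refines to a minimal one, so induction on the level of `(p, 0)` in
`L[I]` puts `p` in `D(L)`. The meet side follows from `L[b, a]ᵒᵈ ≃o Lᵒᵈ[a, b]`.
-/

open Set OrderDual

section JoinCovers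

variable {α : Type*} [PartialOrder α]

def Refines (U A : Finset α) : Prop := ∀ u ∈ U, ∃ x ∈ A, u ≤ x

def IsJoinCover (p : α) (A : Finset α) : Prop := ∃ s, IsLUB (A : Set α) s ∧ p ≤ s

theorem Refines.refl (A : Finset α) : Refines A A := fun u hu => ⟨u, hu, le_rfl⟩

theorem Refines.of_subset {U A : Finset α} (h : U ⊆ A) : Refines U A :=
  fun u hu => ⟨u, h hu, le_rfl⟩

theorem Refines.trans {U V W : Finset α} (hUV : Refines U V) (hVW : Refines V W) :
    Refines U W := fun u hu =>
  let ⟨v, hv, huv⟩ := hUV u hu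
  let ⟨w, hw, hvw⟩ := hVW v hv
  ⟨w, hw, huv.trans hvw⟩

theorem refines_iff_lowerClosure_le {U A : Finset α} :
    Refines U A ↔ lowerClosure (U : Set α) ≤ lowerClosure (A : Set α) := by
  rw [lowerClosure_le]
  rfl

theorem IsJoinCover.mono {p q : α} {A : Finset α} (h : IsJoinCover q A) (hpq : p ≤ q) :
    IsJoinCover p A :=
  let ⟨s, hs, hqs⟩ := h
  ⟨s, hs, hpq.trans hqs⟩

theorem IsJoinCover.erase [DecidableEq α] {p : α} {U : Finset α} (hU : IsJoinCover p U)
    {x y : α} (hy : y ∈ U) (hxy : x ≤ y) (hne : x ≠ y) : IsJoinCover p (U.erase x) := by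
  obtain ⟨s, hs, hps⟩ := hU
  refine ⟨s, (isLUB_congr ?_).1 hs, hps⟩
  refine (upperBounds_mono_set (Finset.coe_subset.2 (U.erase_subset x))).antisymm
    fun z hz w hw => ?_
  obtain rfl | hwx := eq_or_ne w x
  · exact hxy.trans (hz (Finset.mem_erase.2 ⟨hne.symm, hy⟩))
  · exact hz (Finset.mem_erase.2 ⟨hwx, hw⟩)

theorem mem_dset_zero {p : α} : p ∈ Dset α 0 ↔ ∀ A, IsJoinCover p A → ∃ x ∈ A, p ≤ x :=
  ⟨fun h A ⟨s, hs, hps⟩ => h A s hs hps, fun h A s hs hps => h A ⟨s, hs, hps⟩⟩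

theorem mem_dset_succ {p : α} {k : ℕ} :
    p ∈ Dset α (k + 1) ↔ ∀ A, IsJoinCover p A → (∀ x ∈ A, ¬p ≤ x) →
      ∃ U : Finset α, (U : Set α) ⊆ Dset α k ∧ Refines U A ∧ IsJoinCover p U := by
  constructor
  · rintro h A ⟨s, hs, hps⟩ hnt
    obtain ⟨U, t, hUD, hUA, ht, hpt⟩ := h A s hs hps hnt
    exact ⟨U, hUD, hUA, t, ht, hpt⟩
  · intro h A s hs hps hnt
    obtain ⟨U, hUD, hUA, t, ht, hpt⟩ := h A ⟨s, hs, hps⟩ hnt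
    exact ⟨U, t, hUD, hUA, ht, hpt⟩

theorem dset_subset_dset_succ : ∀ k, Dset α k ⊆ Dset α (k + 1)
  | 0 => fun _ hp => mem_dset_succ.2 fun A hA hnt =>
      let ⟨x, hx, hpx⟩ := mem_dset_zero.1 hp A hA
      absurd hpx (hnt x hx)
  | k + 1 => fun _ hp => mem_dset_succ.2 fun A hA hnt =>
      let ⟨U, hUD, hUA, hU⟩ := mem_dset_succ.1 hp A hA hnt
      ⟨U, hUD.trans (dset_subset_dset_succ k), hUA, hU⟩

theorem dset_mono : Monotone (Dset α) :=
  monotone_nat_of_le_succ dset_subset_dset_succ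

theorem exists_dFull_subset_dset [Finite α] : ∃ N, DFull α ⊆ Dset α N := by
  classical
  have := Fintype.ofFinite α
  choose level hlevel using fun p : DFull α => mem_iUnion.1 p.2
  exact ⟨Finset.univ.sup level, fun p hp =>
    dset_mono (Finset.le_sup (Finset.mem_univ ⟨p, hp⟩)) (hlevel ⟨p, hp⟩)⟩

theorem mem_dFull_of_forall_exists_refines [Finite α] {p : α}
    (h : ∀ A, IsJoinCover p A → (∀ x ∈ A, ¬p ≤ x) →
      ∃ U : Finset α, (U : Set α) ⊆ DFull α ∧ Refines U A ∧ IsJoinCover p U) :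
    p ∈ DFull α := by
  obtain ⟨N, hN⟩ := exists_dFull_subset_dset (α := α)
  refine mem_iUnion.2 ⟨N + 1, mem_dset_succ.2 fun A hA hnt => ?_⟩
  obtain ⟨U, hUD, hUA, hU⟩ := h A hA hnt
  exact ⟨U, hUD.trans hN, hUA, hU⟩

theorem exists_refines_subset_dFull [Finite α] {p : α} {A : Finset α} (hp : p ∈ DFull α)
    (hA : IsJoinCover p A) :
    ∃ U : Finset α, (U : Set α) ⊆ DFull α ∧ Refines U A ∧ IsJoinCover p U := by
  by_cases htriv : ∃ x ∈ A, p ≤ x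
  · obtain ⟨x, hx, hpx⟩ := htriv
    refine ⟨{p}, by simp [hp], fun u hu => ⟨x, hx, Finset.mem_singleton.1 hu ▸ hpx⟩,
      p, by simp, le_rfl⟩
  · obtain ⟨N, hN⟩ := exists_dFull_subset_dset (α := α)
    obtain ⟨U, hUD, hUA, hU⟩ :=
      mem_dset_succ.1 (dset_subset_dset_succ N (hN hp)) A hA fun x hx hpx => htriv ⟨x, hx, hpx⟩
    exact ⟨U, hUD.trans (subset_iUnion _ N), hUA, hU⟩

theorem sup_mem_dFull {β : Type*} [SemilatticeSup β] [Finite β] {p q : β} (hp : p ∈ DFull β)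
    (hq : q ∈ DFull β) : p ⊔ q ∈ DFull β := by
  classical
  refine mem_dFull_of_forall_exists_refines fun A hA _ => ?_
  obtain ⟨Up, hUpD, hUpA, tp, htp, hptp⟩ := exists_refines_subset_dFull hp (hA.mono le_sup_left)
  obtain ⟨Uq, hUqD, hUqA, tq, htq, hqtq⟩ := exists_refines_subset_dFull hq (hA.mono le_sup_right)
  refine ⟨Up ∪ Uq, by simpa using ⟨hUpD, hUqD⟩, fun u hu => ?_, tp ⊔ tq,
    by simpa using htp.union htq, sup_le_sup hptp hqtq⟩
  rcases Finset.mem_union.1 hu with hu | hu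
  exacts [hUpA u hu, hUqA u hu]

end JoinCovers

section MinimalJoinCovers

variable {α : Type*} [PartialOrder α]

def IsMinimalJoinCover (p : α) (Q : Finset α) : Prop :=
  IsJoinCover p Q ∧ (∀ x ∈ Q, ¬p ≤ x) ∧ ∀ U, IsJoinCover p U → Refines U Q → Q ⊆ U

namespace IsMinimalJoinCover

variable {p : α} {Q : Finset α}

theorem isAntichain (hQ : IsMinimalJoinCover p Q) : IsAntichain (· ≤ ·) (Q : Set α) := by
  classical
  intro x hx y hy hne hxy
  have := hQ.2.2 _ (hQ.1.erase hy hxy hne) (.of_subset (Q.erase_subset x)) hx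
  simp at this

theorem notMem_dset_zero (hQ : IsMinimalJoinCover p Q) : p ∉ Dset α 0 := fun hp =>
  let ⟨x, hx, hpx⟩ := mem_dset_zero.1 hp Q hQ.1
  hQ.2.1 x hx hpx

theorem coe_subset_dset (hQ : IsMinimalJoinCover p Q) {k : ℕ} (hp : p ∈ Dset α (k + 1)) :
    (Q : Set α) ⊆ Dset α k :=
  let ⟨U, hUD, hUQ, hU⟩ := mem_dset_succ.1 hp Q hQ.1 hQ.2.1
  (Finset.coe_subset.2 (hQ.2.2 U hU hUQ)).trans hUD

end IsMinimalJoinCover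

theorem IsJoinCover.exists_isMinimalJoinCover_refines [Finite α] {p : α} {A : Finset α}
    (hA : IsJoinCover p A) (hnt : ∀ x ∈ A, ¬p ≤ x) :
    ∃ Q, IsMinimalJoinCover p Q ∧ Refines Q A := by
  classical
  have := Fintype.ofFinite α
  let covers := Finset.univ.filter fun U : Finset α => IsJoinCover p U ∧ Refines U A
  -- Minimize the down-set generated by the cover, then its size.
  let size : Finset α → ℕ ×ₗ ℕ := fun U => toLex ((lowerClosure (U : Set α) : Set α).ncard, U.card)
  obtain ⟨Q, hQ, hQmin⟩ := covers.exists_min_image size ⟨A, by simp [covers, hA, Refines.refl]⟩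
  simp only [covers, Finset.mem_filter, Finset.mem_univ, true_and] at hQ hQmin
  have hmin : ∀ V, IsJoinCover p V → Refines V Q →
      lowerClosure (V : Set α) = lowerClosure (Q : Set α) ∧ Q.card ≤ V.card := by
    intro V hV hVQ
    have hle := refines_iff_lowerClosure_le.1 hVQ
    rcases Prod.Lex.le_iff.1 (hQmin V ⟨hV, hVQ.trans hQ.2⟩) with hlt | ⟨heq, hcard⟩
    · exact absurd (ncard_le_ncard (LowerSet.coe_subset_coe.2 hle)) hlt.not_ge
    · exact ⟨SetLike.coe_injective (eq_of_subset_of_ncard_le hle heq.le), hcard⟩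
  have hanti : IsAntichain (· ≤ ·) (Q : Set α) := by
    intro x hx y hy hne hxy
    have := (hmin _ (hQ.1.erase hy hxy hne) (.of_subset (Q.erase_subset x))).2
    exact (Finset.card_erase_lt_of_mem hx).not_ge this
  refine ⟨Q, ⟨hQ.1, fun x hx hpx => ?_, fun U hU hUQ q hq => ?_⟩, hQ.2⟩
  · obtain ⟨a, ha, hxa⟩ := hQ.2 x hx
    exact hnt a ha (hpx.trans hxa)
  · obtain ⟨u, hu, hqu⟩ : q ∈ lowerClosure (U : Set α) :=
      (hmin U hU hUQ).1 ▸ subset_lowerClosure (Finset.mem_coe.2 hq)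
    obtain ⟨q', hq', huq'⟩ := hUQ u hu
    obtain rfl := hanti.eq hq hq' (hqu.trans huq')
    rwa [le_antisymm hqu huq']

end MinimalJoinCovers

section GaloisConnection

variable {α β : Type*} [PartialOrder α] [PartialOrder β] {l : α → β} {u : β → α} {r : α → β}

theorem _root_.GaloisConnection.isJoinCover_image [DecidableEq β] (gl : GaloisConnection l u)
    {p : α} {A : Finset α} (hA : IsJoinCover p A) : IsJoinCover (l p) (A.image l) :=
  let ⟨s, hs, hps⟩ := hA
  ⟨l s, by simpa using gl.isLUB_l_image hs, gl.monotone_l hps⟩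

theorem _root_.GaloisConnection.mapsTo_dset (gl : GaloisConnection l u)
    (gu : GaloisConnection u r) (k : ℕ) : MapsTo l (Dset α k) (Dset β k) := by
  classical
  induction k with
  | zero =>
    refine fun p hp => mem_dset_zero.2 fun A hA => ?_
    obtain ⟨x, hx, hpx⟩ := mem_dset_zero.1 hp _ ((gu.isJoinCover_image hA).mono (gl.le_u_l p))
    obtain ⟨y, hy, rfl⟩ := Finset.mem_image.1 hx
    exact ⟨y, hy, gl.l_le hpx⟩
  | succ k ih =>
    refine fun p hp => mem_dset_succ.2 fun A hA hnt => ?_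
    have hnt' : ∀ x ∈ A.image u, ¬p ≤ x := by
      simp only [Finset.mem_image, forall_exists_index, and_imp, forall_apply_eq_imp_iff₂]
      exact fun y hy hpy => hnt y hy (gl.l_le hpy)
    obtain ⟨W, hWD, hWA, hW⟩ :=
      mem_dset_succ.1 hp _ ((gu.isJoinCover_image hA).mono (gl.le_u_l p)) hnt'
    refine ⟨W.image l, by simpa using (ih.mono_left hWD).image_subset, fun y hy => ?_,
      gl.isJoinCover_image hW⟩
    obtain ⟨w, hw, rfl⟩ := Finset.mem_image.1 hy
    obtain ⟨x, hx, hwx⟩ := hWA w hw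
    obtain ⟨z, hz, rfl⟩ := Finset.mem_image.1 hx
    exact ⟨z, hz, gl.l_le hwx⟩

theorem _root_.GaloisConnection.isMinimalJoinCover_image [DecidableEq α] [DecidableEq β]
    (gl : GaloisConnection l u) (gu : GaloisConnection u r) (hul : Function.LeftInverse u l)
    {p : α} {Q : Finset α} (hQ : IsMinimalJoinCover p Q) :
    IsMinimalJoinCover (l p) (Q.image l) := by
  have le_of_le_l : ∀ {y q}, y ≤ l q → u y ≤ q := fun h => (gu.monotone_l h).trans_eq (hul _)
  refine ⟨gl.isJoinCover_image hQ.1, ?_, fun U hU hUQ => ?_⟩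
  · simp only [Finset.mem_image, forall_exists_index, and_imp, forall_apply_eq_imp_iff₂]
    exact fun q hq hpq => hQ.2.1 q hq ((gl.le_u hpq).trans_eq (hul q))
  have hQU : Q ⊆ U.image u := by
    refine hQ.2.2 _ ((gu.isJoinCover_image hU).mono (hul p).ge) fun x hx => ?_
    obtain ⟨y, hy, rfl⟩ := Finset.mem_image.1 hx
    obtain ⟨_, hlq, hyq⟩ := hUQ y hy
    obtain ⟨q, hq, rfl⟩ := Finset.mem_image.1 hlq
    exact ⟨q, hq, le_of_le_l hyq⟩
  intro y hy
  obtain ⟨q, hq, rfl⟩ := Finset.mem_image.1 hy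
  obtain ⟨z, hz, rfl⟩ := Finset.mem_image.1 (hQU hq)
  obtain ⟨_, hlq', hzq'⟩ := hUQ z hz
  obtain ⟨q', hq', rfl⟩ := Finset.mem_image.1 hlq'
  obtain rfl := hQ.isAntichain.eq hq hq' (le_of_le_l hzq')
  rwa [le_antisymm (gl.l_u_le z) hzq']

theorem _root_.GaloisConnection.dFull_eq_univ_of_leftInverse [Finite α]
    (gl : GaloisConnection l u) (gu : GaloisConnection u r) (hul : Function.LeftInverse u l)
    (h : DFull β = univ) : DFull α = univ := by
  classical
  suffices ∀ k p, l p ∈ Dset β k → p ∈ DFull α from eq_univ_of_forall fun p =>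
    let ⟨k, hk⟩ := mem_iUnion.1 (h ▸ mem_univ (l p) : l p ∈ DFull β)
    this k p hk
  intro k
  induction k with
  | zero =>
    refine fun p hp => mem_dFull_of_forall_exists_refines fun A hA hnt => ?_
    obtain ⟨Q, hQ, -⟩ := hA.exists_isMinimalJoinCover_refines hnt
    exact absurd hp (gl.isMinimalJoinCover_image gu hul hQ).notMem_dset_zero
  | succ k ih =>
    refine fun p hp => mem_dFull_of_forall_exists_refines fun A hA hnt => ?_
    obtain ⟨Q, hQ, hQA⟩ := hA.exists_isMinimalJoinCover_refines hnt
    have hlQ := (gl.isMinimalJoinCover_image gu hul hQ).coe_subset_dset hp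
    exact ⟨Q, fun q hq => ih q (hlQ (by simpa using ⟨q, hq, rfl⟩)), hQA, hQ.1⟩

theorem _root_.OrderIso.dFull_eq_univ (e : α ≃o β) (h : DFull α = univ) : DFull β = univ :=
  eq_univ_of_forall fun q =>
    let ⟨k, hk⟩ := mem_iUnion.1 (h ▸ mem_univ (e.symm q) : e.symm q ∈ DFull α)
    mem_iUnion.2 ⟨k, by
      simpa using e.to_galoisConnection.mapsTo_dset e.symm.to_galoisConnection k hk⟩

theorem _root_.OrderIso.dFull_eq_univ_iff (e : α ≃o β) : DFull α = univ ↔ DFull β = univ :=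
  ⟨e.dFull_eq_univ, e.symm.dFull_eq_univ⟩

end GaloisConnection

theorem ddFull_eq_univ_iff {α : Type*} [PartialOrder α] : DdFull α = univ ↔ DFull αᵒᵈ = univ :=
  ⟨fun h => eq_univ_of_forall fun x => (h ▸ mem_univ (ofDual x) : ofDual x ∈ DdFull α),
    fun h => eq_univ_of_forall fun p => (h ▸ mem_univ (toDual p) : toDual p ∈ DFull αᵒᵈ)⟩

namespace Doubled

variable {L : Type u} [Lattice L] {b a : L}

theorem le_def {x y : Doubled L b a} :
    x ≤ y ↔ x.1.1 ≤ y.1.1 ∧ (x.1.1 ∈ Icc b a → y.1.1 ∈ Icc b a → x.1.2 ≤ y.1.2) :=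
  Iff.rfl

theorem mem_Icc_of_snd {x : Doubled L b a} (h : x.1.2 = true) : x.1.1 ∈ Icc b a :=
  x.2.resolve_right (by simp [h])

-- Outside `[b, a]` the flag is `false`, so `x.1.2 || y.1.2` asks whether `x` or `y` lies in the
-- upper copy.
open scoped Classical in
noncomputable instance : SemilatticeSup (Doubled L b a) where
  sup x y := ⟨(x.1.1 ⊔ y.1.1, decide (x.1.1 ⊔ y.1.1 ∈ Icc b a) && (x.1.2 || y.1.2)), by
    by_cases h : x.1.1 ⊔ y.1.1 ∈ Icc b a <;> simp [h]⟩
  le_sup_left x y := ⟨le_sup_left, fun _ hxy => Bool.le_iff_imp.2 fun hx => by simp [hxy, hx]⟩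
  le_sup_right x y := ⟨le_sup_right, fun _ hxy => Bool.le_iff_imp.2 fun hy => by simp [hxy, hy]⟩
  sup_le x y z hxz hyz := ⟨sup_le hxz.1 hyz.1, fun _ hz => by
    simp only [Bool.le_iff_imp, Bool.and_eq_true, Bool.or_eq_true]
    rintro ⟨-, hx | hy⟩
    · exact Bool.le_iff_imp.1 (hxz.2 (mem_Icc_of_snd hx) hz) hx
    · exact Bool.le_iff_imp.1 (hyz.2 (mem_Icc_of_snd hy) hz) hy⟩

open scoped Classical in
theorem coe_sup (x y : Doubled L b a) :
    (x ⊔ y).1 = (x.1.1 ⊔ y.1.1, decide (x.1.1 ⊔ y.1.1 ∈ Icc b a) && (x.1.2 || y.1.2)) :=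
  rfl

instance [Finite L] : Finite (Doubled L b a) := Subtype.finite

def lower (v : L) : Doubled L b a := ⟨(v, false), Or.inr rfl⟩

open scoped Classical in
noncomputable def upper (w : L) : Doubled L b a :=
  ⟨(w, decide (w ∈ Icc b a)), by by_cases h : w ∈ Icc b a <;> simp [h]⟩

theorem gc_lower_proj : GaloisConnection (lower : L → Doubled L b a) proj :=
  fun _ _ => ⟨fun h => h.1, fun h => ⟨h, fun _ _ => Bool.false_le _⟩⟩

theorem gc_proj_upper : GaloisConnection proj (upper : L → Doubled L b a) :=
  fun _ _ => ⟨fun h => ⟨h, fun _ hw => by simp only [upper] at hw ⊢; simp [hw]⟩, fun h => h.1⟩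

theorem proj_lower : Function.LeftInverse proj (lower : L → Doubled L b a) := fun _ => rfl

theorem eq_lower_or_eq_upper (x : Doubled L b a) :
    x = lower (proj x) ∨ proj x ∈ Icc b a ∧ x = upper (proj x) := by
  obtain ⟨⟨v, _ | _⟩, hx⟩ := x
  · exact Or.inl rfl
  · have hv : v ∈ Icc b a := hx.resolve_right (by simp)
    exact Or.inr ⟨hv, Subtype.ext (by simp [upper, proj, hv])⟩

theorem lower_sup_upper_left {u : L} (hu : u ∈ Icc b a) :
    lower u ⊔ upper b = (upper u : Doubled L b a) := by
  have hb : b ∈ Icc b a := ⟨le_rfl, hu.1.trans hu.2⟩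
  apply Subtype.ext
  rw [coe_sup]
  simp [lower, upper, sup_eq_left.2 hu.1, hu, hb]

theorem lower_mem_dFull {u : L} (hu : u ∈ DFull L) : (lower u : Doubled L b a) ∈ DFull _ :=
  let ⟨k, hk⟩ := mem_iUnion.1 hu
  mem_iUnion.2 ⟨k, gc_lower_proj.mapsTo_dset gc_proj_upper k hk⟩

theorem upper_left_mem_dFull [Finite L] (hba : b ≤ a) (hL : DFull L = univ) :
    (upper b : Doubled L b a) ∈ DFull _ := by
  classical
  have hb : b ∈ Icc b a := ⟨le_rfl, hba⟩
  refine mem_dFull_of_forall_exists_refines fun A hA hnt => ?_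
  have ⟨s, hs, hbs⟩ := hA
  -- A join above `upper b` inside the interval would have to come from a member of `A` in the
  -- upper copy, and that member would already lie above `upper b`.
  have hsI : proj s ∉ Icc b a := by
    intro hsI
    have hs2 : s.1.2 = true := Bool.eq_true_of_true_le (by simpa [upper, hb] using hbs.2 hb hsI)
    obtain ⟨y, hy, hy2⟩ : ∃ y ∈ A, y.1.2 = true := by
      by_contra! hA2
      have hsl : s ≤ lower (proj s) :=
        hs.2 fun y hy => ⟨(hs.1 hy).1, fun _ _ => by simp [hA2 y hy]⟩
      exact absurd (hsl.2 hsI hsI) (by simp [hs2, lower])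
    exact hnt y hy ⟨(mem_Icc_of_snd hy2).1, fun _ _ => hy2 ▸ Bool.le_true _⟩
  obtain ⟨x₀, hx₀, hx₀a⟩ : ∃ x₀ ∈ A, ¬proj x₀ ≤ a := by
    by_contra! h
    refine hsI ⟨hbs.1, (gc_proj_upper.isLUB_l_image hs).2 ?_⟩
    rintro _ ⟨y, hy, rfl⟩
    exact h y hy
  -- Joining `x₀` to a refinement in `D(L)` of the cover `b ≤ ⋁ proj '' A` lands outside `[b, a]`,
  -- hence above `upper b`.
  obtain ⟨W, hWD, hWA, t, ht, hbt⟩ :=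
    exists_refines_subset_dFull (hL ▸ mem_univ b) (gc_proj_upper.isJoinCover_image hA)
  refine ⟨(insert (proj x₀) W).image lower, ?_, fun y hy => ?_, lower (proj x₀ ⊔ t), ?_,
    hbt.trans le_sup_right, fun _ h => absurd (le_sup_left.trans h.2) hx₀a⟩
  · rw [Finset.coe_image]
    exact image_subset_iff.2 fun w _ => lower_mem_dFull (hL ▸ mem_univ w)
  · obtain ⟨w, hw, rfl⟩ := Finset.mem_image.1 hy
    rcases Finset.mem_insert.1 hw with rfl | hw
    · exact ⟨x₀, hx₀, gc_lower_proj.l_u_le x₀⟩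
    · obtain ⟨_, hpx, hwx⟩ := hWA w hw
      obtain ⟨x, hx, rfl⟩ := Finset.mem_image.1 hpx
      exact ⟨x, hx, gc_lower_proj.l_le hwx⟩
  · rw [Finset.coe_image, Finset.coe_insert]
    exact gc_lower_proj.isLUB_l_image (ht.insert _)

theorem dFull_eq_univ_iff [Finite L] (hba : b ≤ a) :
    DFull (Doubled L b a) = univ ↔ DFull L = univ := by
  refine ⟨gc_lower_proj.dFull_eq_univ_of_leftInverse gc_proj_upper proj_lower, fun hL => ?_⟩
  refine eq_univ_of_forall fun x => ?_
  rcases eq_lower_or_eq_upper x with hx | ⟨hxI, hx⟩ <;> rw [hx]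
  · exact lower_mem_dFull (hL ▸ mem_univ _)
  · rw [← lower_sup_upper_left hxI]
    exact sup_mem_dFull (lower_mem_dFull (hL ▸ mem_univ _)) (upper_left_mem_dFull hba hL)

theorem toDual_mem_Icc {v : L} : toDual v ∈ Icc (toDual a) (toDual b) ↔ v ∈ Icc b a := by
  rw [Icc_toDual]
  rfl

open scoped Classical in
noncomputable def swap (x : Doubled L b a) : Doubled Lᵒᵈ (toDual a) (toDual b) :=
  ⟨(toDual x.1.1, decide (x.1.1 ∈ Icc b a) && !x.1.2), by
    by_cases h : x.1.1 ∈ Icc b a <;> simp [h]⟩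

theorem swap_swap (x : Doubled L b a) : swap (swap x) = x := by
  refine Subtype.ext (Prod.ext rfl ?_)
  by_cases h : x.1.1 ∈ Icc b a
  · simp [swap, h]
  · simpa [swap, h, toDual_mem_Icc] using (x.2.resolve_left h).symm

theorem swap_le_swap {x y : Doubled L b a} : swap x ≤ swap y ↔ y ≤ x := by
  simp only [le_def, swap]
  refine and_congr_right fun _ => ?_
  by_cases hx : x.1.1 ∈ Icc b a <;> by_cases hy : y.1.1 ∈ Icc b a <;> simp [hx, hy]
  cases x.1.2 <;> cases y.1.2 <;> decide

noncomputable def dualIso : (Doubled L b a)ᵒᵈ ≃o Doubled Lᵒᵈ (toDual a) (toDual b) where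
  toFun x := swap (ofDual x)
  invFun y := toDual (swap y)
  left_inv x := swap_swap (ofDual x)
  right_inv := swap_swap
  map_rel_iff' := swap_le_swap

end Doubled

/-- A finite lattice is bounded if and only if the doubling of
any of its intervals is bounded. -/
theorem bounded_iff_doubled_bounded
    (L : Type u) [Lattice L] [Finite L] (b a : L) (hba : b ≤ a) :
    IsBoundedLat L ↔ IsBoundedLat (Doubled L b a) := by
  rw [IsBoundedLat, IsBoundedLat, ddFull_eq_univ_iff, ddFull_eq_univ_iff,
    Doubled.dualIso.dFull_eq_univ_iff, Doubled.dFull_eq_univ_iff hba,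
    Doubled.dFull_eq_univ_iff (L := Lᵒᵈ) (b := toDual a) (toDual_le_toDual.2 hba)]

end FreeLatticePaper
end

section
/- Let S be a finite partially defined lattice in which only joins are defined (no nontrivial meets are defined), and let R₋ be a set of pairs (u,v) ∈ S × S with u ≰ v in S. Then there is a finite distributive lattice D and a PDL homomorphism h : S → D such that h(u) ≰ h(v) for every (u,v) ∈ R₋; consequently S (with R₋) occurs in a free lattice. -/
/-!
Send `a` to the set of elements not above it. An element lies above a join `⋁ A` iff it lies
above every member of `A`, so defined joins go to unions; a trivial meet is the least element
of its arguments, so any monotone map keeps it; and `u ≰ v` is witnessed by `v` itself. This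
places `S` in the finite Boolean lattice of subsets of `S`.

For the free lattice, send a set `s` to the join of the free generators indexed by `s`. This
preserves all joins (the empty one because the meet of all generators is a bottom) and it
reflects inclusion: evaluate in the two-element lattice, sending one generator to `⊤` and
all others to `⊥`.
-/

open FirstOrder

namespace FreeLatticePaper

universe u v w u' v'

/-- A lattice `F` is free on a subset `X ⊆ F` if every map from `X` to a lattice
extends uniquely to a lattice homomorphism. -/
def IsFreeOn (F : Type u) [Lattice F] (X : Set F) : Prop :=
  ∀ (L : Type v) [Lattice L] (f : X → L), ∃! g : LatticeHom F L, ∀ x : X, g x = f x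

/-- An `S`-homomorphism: a PDL homomorphism that moreover respects the
negations in `Rneg`, i.e. `h u ≰ h v` for every `(u, v) ∈ Rneg`. -/
def PDLOps.IsSHom {α : Type u} [PartialOrder α] (P : PDLOps α) (Rneg : Set (α × α))
    {β : Type v} [PartialOrder β] (h : α → β) : Prop :=
  P.IsHom h ∧ ∀ p ∈ Rneg, ¬ h p.1 ≤ h p.2

section PDL

variable {α : Type u} [PartialOrder α] (P : PDLOps α)

def PDLOps.MeetsTrivial : Prop :=
  ∀ (A : Finset α) (c : α), c ∈ P.meetOf A → c ∈ A

variable {P} {β : Type v} [PartialOrder β] {γ : Type w} [PartialOrder γ]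

theorem PDLOps.MeetsTrivial.isGLB_image (hP : P.MeetsTrivial) {h : α → β} (hh : Monotone h)
    {A : Finset α} {c : α} (hc : c ∈ P.meetOf A) : IsGLB (h '' A) (h c) :=
  (hh.map_isLeast ⟨hP A c hc, (P.isGLB_meetOf A c hc).1⟩).isGLB

theorem PDLOps.IsSHom.comp_orderEmbedding (hP : P.MeetsTrivial) {Rneg : Set (α × α)}
    {h : α → β} (hh : P.IsSHom Rneg h) (φ : β ↪o γ)
    (hφ : ∀ (s : Set β) (c : β), IsLUB s c → IsLUB (φ '' s) (φ c)) :
    P.IsSHom Rneg (φ ∘ h) := by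
  obtain ⟨⟨hmono, hjoin, -⟩, hneg⟩ := hh
  refine ⟨⟨φ.monotone.comp hmono, fun A c hc => ?_, fun A c hc => ?_⟩, fun p hp => ?_⟩
  · rw [Set.image_comp]
    exact hφ _ _ (hjoin A c hc)
  · exact hP.isGLB_image (φ.monotone.comp hmono) hc
  · simpa using hneg p hp

end PDL

theorem compl_Ici_eq_biUnion_of_isLUB {α : Type u} [Preorder α] {s : Set α} {c : α}
    (hc : IsLUB s c) : (Set.Ici c)ᶜ = ⋃ b ∈ s, (Set.Ici b)ᶜ := by
  ext y
  simp [isLUB_le_iff hc, upperBounds]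

theorem PDLOps.isSHom_preimage_compl_Ici {α : Type u} [PartialOrder α] {P : PDLOps α}
    (hP : P.MeetsTrivial) {Rneg : Set (α × α)} (hR : ∀ p ∈ Rneg, ¬ p.1 ≤ p.2) {β : Type v}
    {e : β → α} (he : Function.Surjective e) :
    P.IsSHom Rneg (fun a => e ⁻¹' (Set.Ici a)ᶜ) := by
  have hmono : Monotone (fun a => e ⁻¹' (Set.Ici a)ᶜ) := fun a b hab y hy hby => hy (hab.trans hby)
  refine ⟨⟨hmono, fun A c hc => ?_, fun A c hc => hP.isGLB_image hmono hc⟩, ?_⟩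
  · simp only [compl_Ici_eq_biUnion_of_isLUB (P.isLUB_joinOf A c hc), Set.preimage_iUnion₂]
    exact isLUB_biSup
  · rintro ⟨u, v⟩ huv hle
    obtain ⟨y, rfl⟩ := he v
    exact hle (hR _ huv) le_rfl

inductive LatticeTerm (X : Type u) : Type u
  | of : X → LatticeTerm X
  | sup : LatticeTerm X → LatticeTerm X → LatticeTerm X
  | inf : LatticeTerm X → LatticeTerm X → LatticeTerm X

namespace LatticeTerm

variable {X : Type u}

def eval {L : Type v} [Lattice L] (f : X → L) : LatticeTerm X → L
  | of x => f x
  | sup s t => s.eval f ⊔ t.eval f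
  | inf s t => s.eval f ⊓ t.eval f

def Le (s t : LatticeTerm X) : Prop :=
  ∀ (L : Type v) [Lattice L] (f : X → L), s.eval f ≤ t.eval f

theorem Le.refl (s : LatticeTerm X) : Le.{u, v} s s := fun _ _ _ => le_rfl

theorem Le.trans {s t r : LatticeTerm X} (hst : Le.{u, v} s t) (htr : Le.{u, v} t r) :
    Le.{u, v} s r :=
  fun L _ f => (hst L f).trans (htr L f)

def setoid (X : Type u) : Setoid (LatticeTerm X) where
  r s t := Le.{u, v} s t ∧ Le.{u, v} t s
  iseqv := ⟨fun s => ⟨Le.refl s, Le.refl s⟩, fun h => ⟨h.2, h.1⟩,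
    fun h₁ h₂ => ⟨h₁.1.trans h₂.1, h₂.2.trans h₁.2⟩⟩

end LatticeTerm

/-- The free lattice on `X`, as lattice terms modulo the identities valid in all lattices of
universe `v`; it is free with respect to lattices of that universe. -/
def FreeLattice (X : Type u) : Type u :=
  Quotient (LatticeTerm.setoid.{u, v} X)

namespace FreeLattice

open LatticeTerm

variable {X : Type u}

instance : Lattice (FreeLattice.{u, v} X) where
  le := Quotient.lift₂ Le.{u, v} fun _ _ _ _ h₁ h₂ =>
    propext ⟨fun h => (h₁.2.trans h).trans h₂.1, fun h => (h₁.1.trans h).trans h₂.2⟩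
  le_refl := Quotient.ind Le.refl
  le_trans := Quotient.ind fun _ => Quotient.ind₂ fun _ _ => Le.trans
  le_antisymm := Quotient.ind₂ fun _ _ h₁ h₂ => Quotient.sound ⟨h₁, h₂⟩
  sup := Quotient.map₂ sup fun _ _ h₁ _ _ h₂ =>
    ⟨fun L _ f => sup_le_sup (h₁.1 L f) (h₂.1 L f), fun L _ f => sup_le_sup (h₁.2 L f) (h₂.2 L f)⟩
  le_sup_left := Quotient.ind₂ fun _ _ _ _ _ => le_sup_left
  le_sup_right := Quotient.ind₂ fun _ _ _ _ _ => le_sup_right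
  sup_le := Quotient.ind₂ fun _ _ => Quotient.ind fun _ h₁ h₂ L _ f => sup_le (h₁ L f) (h₂ L f)
  inf := Quotient.map₂ inf fun _ _ h₁ _ _ h₂ =>
    ⟨fun L _ f => inf_le_inf (h₁.1 L f) (h₂.1 L f), fun L _ f => inf_le_inf (h₁.2 L f) (h₂.2 L f)⟩
  inf_le_left := Quotient.ind₂ fun _ _ _ _ _ => inf_le_left
  inf_le_right := Quotient.ind₂ fun _ _ _ _ _ => inf_le_right
  le_inf := Quotient.ind fun _ => Quotient.ind₂ fun _ _ h₁ h₂ L _ f => le_inf (h₁ L f) (h₂ L f)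

def of (x : X) : FreeLattice.{u, v} X :=
  Quotient.mk _ (LatticeTerm.of x)

@[elab_as_elim]
theorem induction_on {p : FreeLattice.{u, v} X → Prop} (a : FreeLattice.{u, v} X)
    (of : ∀ x, p (of x)) (sup : ∀ a b, p a → p b → p (a ⊔ b))
    (inf : ∀ a b, p a → p b → p (a ⊓ b)) : p a := by
  induction a using Quotient.ind with | _ t
  induction t with
  | of x => exact of x
  | sup s t hs ht => exact sup _ _ hs ht
  | inf s t hs ht => exact inf _ _ hs ht

variable {L : Type v} [Lattice L]

def lift (f : X → L) : LatticeHom (FreeLattice.{u, v} X) L where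
  toFun := Quotient.lift (eval f) fun _ _ h => le_antisymm (h.1 L f) (h.2 L f)
  map_sup' := Quotient.ind₂ fun _ _ => rfl
  map_inf' := Quotient.ind₂ fun _ _ => rfl

theorem hom_ext {g₁ g₂ : LatticeHom (FreeLattice.{u, v} X) L} (h : ∀ x, g₁ (of x) = g₂ (of x)) :
    g₁ = g₂ :=
  DFunLike.ext _ _ fun a => a.induction_on h
    (fun a b ha hb => by rw [map_sup, map_sup, ha, hb])
    (fun a b ha hb => by rw [map_inf, map_inf, ha, hb])

theorem isFreeOn (X : Type u) : IsFreeOn.{u, v} (FreeLattice.{u, v} X) (Set.range of) := by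
  intro L _ f
  refine ⟨lift fun x => f ⟨of x, x, rfl⟩, ?_, fun g hg => hom_ext fun x => ?_⟩
  · rintro ⟨-, x, rfl⟩
    rfl
  · exact (hg ⟨of x, x, rfl⟩).trans rfl

noncomputable instance [Finite X] [Nonempty X] : OrderBot (FreeLattice.{u, v} X) where
  bot := letI := Fintype.ofFinite X; Finset.univ.inf' Finset.univ_nonempty of
  bot_le a := letI := Fintype.ofFinite X
    a.induction_on (fun x => Finset.inf'_le _ (Finset.mem_univ x))
      (fun _ _ ha _ => le_sup_of_le_left ha) (fun _ _ ha hb => le_inf ha hb)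

end FreeLattice

section FiniteSup

variable {β : Type u} [Finite β] {G : Type v} [SemilatticeSup G] [OrderBot G]

noncomputable def finiteSup (g : β → G) (s : Set β) : G :=
  s.toFinite.toFinset.sup g

variable {g : β → G} {s t : Set β}

theorem finiteSup_le_iff {z : G} : finiteSup g s ≤ z ↔ ∀ y ∈ s, g y ≤ z := by
  simp [finiteSup]

theorem le_finiteSup {y : β} (hy : y ∈ s) : g y ≤ finiteSup g s :=
  finiteSup_le_iff.1 le_rfl y hy

theorem finiteSup_mono (hst : s ⊆ t) : finiteSup g s ≤ finiteSup g t :=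
  finiteSup_le_iff.2 fun _ hy => le_finiteSup (hst hy)

theorem isLUB_image_finiteSup {S : Set (Set β)} {c : Set β} (hc : IsLUB S c) :
    IsLUB (finiteSup g '' S) (finiteSup g c) := by
  refine ⟨Set.forall_mem_image.2 fun t ht => finiteSup_mono (hc.1 ht), fun z hz => ?_⟩
  rw [hc.unique (isLUB_sSup S), finiteSup_le_iff]
  rintro y ⟨t, ht, hy⟩
  exact (le_finiteSup hy).trans (hz ⟨t, ht, rfl⟩)

theorem map_finiteSup {L : Type*} [SemilatticeSup L] [OrderBot L] {F : Type*} [FunLike F G L]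
    [SupHomClass F G L] (φ : F) (hφ : φ ⊥ = ⊥) : φ (finiteSup g s) = finiteSup (φ ∘ g) s :=
  Finset.apply_sup_eq_sup_comp φ (map_sup φ) hφ

end FiniteSup

namespace FreeLattice

variable {β : Type u} [Finite β]

/-- The extra generator `none` keeps the bottom, the meet of all generators, from evaluating
to `⊤` under the valuation that singles out one generator `some y`. -/
theorem finiteSup_of_some_le_iff {s t : Set β} :
    finiteSup (of.{u, v} ∘ some) s ≤ finiteSup (of ∘ some) t ↔ s ⊆ t := by
  refine ⟨fun hst y hy => ?_, finiteSup_mono⟩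
  let f : Option β → ULift.{v} Prop := fun o => ULift.up (o = some y)
  have hmono : Monotone (lift f) := OrderHomClass.mono _
  have hbot : lift f ⊥ = ⊥ :=
    le_bot_iff.1 <| (hmono (bot_le : ⊥ ≤ of none)).trans fun (h : none = some y) => nomatch h
  have hy_mem : f (some y) ≤ ULift.up (y ∈ t) :=
    calc f (some y) = lift f (of (some y)) := rfl
      _ ≤ lift f (finiteSup (of ∘ some) s) := hmono (le_finiteSup (g := of ∘ some) hy)
      _ ≤ lift f (finiteSup (of ∘ some) t) := hmono hst
      _ = finiteSup (f ∘ some) t := map_finiteSup (lift f) hbot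
      _ ≤ ULift.up (y ∈ t) := finiteSup_le_iff.2 fun z hz hzy => Option.some_injective _ hzy ▸ hz
  exact hy_mem rfl

noncomputable def finiteSupOfSome : Set β ↪o FreeLattice.{u, v} (Option β) :=
  OrderEmbedding.ofMapLEIff _ fun _ _ => finiteSup_of_some_le_iff

end FreeLattice

/-- A finite PDL in which only joins are defined (all defined
meets being trivial), together with negations `Rneg` consistent with its order,
occurs in a finite distributive lattice, and hence in a free lattice. -/
theorem join_only_pdl_occurs_in_distributive_and_free
    {α : Type u} [PartialOrder α] [Finite α] (P : PDLOps α)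
    (hmeets : ∀ (A : Finset α) (c : α), c ∈ P.meetOf A → c ∈ A)
    (Rneg : Set (α × α)) (hR : ∀ p ∈ Rneg, ¬ p.1 ≤ p.2) :
    (∃ (D : Type v) (_ : DistribLattice D), Finite D ∧
        ∃ h : α → D, P.IsSHom Rneg h) ∧
    (∃ (G : Type v) (_ : Lattice G) (Y : Set G), IsFreeOn G Y ∧
        ∃ h : α → G, P.IsSHom Rneg h) := by
  have hD := P.isSHom_preimage_compl_Ici hmeets hR (equivShrink.{v} α).symm.surjective
  exact ⟨⟨_, inferInstance, inferInstance, _, hD⟩,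
    ⟨_, inferInstance, _, FreeLattice.isFreeOn _, _,
      hD.comp_orderEmbedding hmeets FreeLattice.finiteSupOfSome fun _ _ => isLUB_image_finiteSup⟩⟩

end FreeLatticePaper
end

section
/- Let K be a lattice generated (under join and meet) by a finite subset Y, and suppose every element of K is the join of a finite set of join-irreducible elements of K. Then K is generated by a finite set Y′ all of whose elements are join irreducible, and Y′ can moreover be chosen so that for any two incomparable y, z ∈ Y′, the meet y ⊓ z does not belong to Y′. -/
/-!
Replace each generator by the finitely many join irreducibles whose join it is: the union is a
finite generating set of join irreducibles. Among its generating subsets take a minimal one; if it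
contained the meet of two incomparable members, that meet would differ from both and could be
dropped without changing the generated sublattice.
-/

open FirstOrder

namespace FreeLatticePaper

universe u v w u' v'

/-- `a` is join irreducible: `a = b ⊔ c` implies `a = b` or `a = c`. -/
def JoinIrred {L : Type u} [Lattice L] (a : L) : Prop :=
  ∀ b c : L, b ⊔ c = a → b = a ∨ c = a

/-- `a` is meet irreducible: `a = b ⊓ c` implies `a = b` or `a = c`. -/
def MeetIrred {L : Type u} [Lattice L] (a : L) : Prop :=
  ∀ b c : L, b ⊓ c = a → b = a ∨ c = a

section

variable {K : Type u} [Lattice K]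

lemma latticeClosure_eq_univ_of_subset {s t : Set K} (hs : latticeClosure s = Set.univ)
    (hst : s ⊆ latticeClosure t) : latticeClosure t = Set.univ :=
  Set.univ_subset_iff.mp <| hs ▸ latticeClosure_min hst isSublattice_latticeClosure

lemma latticeClosure_erase_inf [DecidableEq K] {S : Finset K} {y z : K} (hy : y ∈ S)
    (hz : z ∈ S) (hyz : ¬ y ≤ z) (hzy : ¬ z ≤ y) :
    latticeClosure (↑(S.erase (y ⊓ z)) : Set K) = latticeClosure ↑S := by
  have hy' : y ∈ S.erase (y ⊓ z) := Finset.mem_erase.mpr ⟨fun h ↦ hyz (h ▸ inf_le_right), hy⟩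
  have hz' : z ∈ S.erase (y ⊓ z) := Finset.mem_erase.mpr ⟨fun h ↦ hzy (h ▸ inf_le_left), hz⟩
  refine (latticeClosure_mono (Finset.erase_subset _ _)).antisymm <|
    latticeClosure_min (fun a ha ↦ ?_) isSublattice_latticeClosure
  by_cases ham : a = y ⊓ z
  · exact ham ▸ isSublattice_latticeClosure.infClosed
      (subset_latticeClosure hy') (subset_latticeClosure hz')
  · exact subset_latticeClosure (Finset.mem_erase.mpr ⟨ham, ha⟩)

lemma exists_subset_latticeClosure_eq_inf_notMem (S : Finset K) :
    ∃ S' ⊆ S, latticeClosure (↑S' : Set K) = latticeClosure ↑S ∧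
      ∀ y ∈ S', ∀ z ∈ S', ¬ y ≤ z → ¬ z ≤ y → y ⊓ z ∉ S' := by
  classical
  obtain ⟨S', hS'S, hmin⟩ := exists_minimal_le_of_wellFoundedLT
    (fun T : Finset K ↦ latticeClosure (↑T : Set K) = latticeClosure ↑S) S rfl
  refine ⟨S', hS'S, hmin.prop, fun y hy z hz hyz hzy hyzS' ↦ ?_⟩
  have herase : latticeClosure (↑(S'.erase (y ⊓ z)) : Set K) = latticeClosure ↑S :=
    (latticeClosure_erase_inf hy hz hyz hzy).trans hmin.prop
  exact (Finset.erase_ssubset hyzS').not_ge (hmin.le_of_le herase (Finset.erase_subset _ _))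

lemma exists_finset_joinIrred_latticeClosure_eq_univ {Y : Finset K}
    (hgen : latticeClosure (↑Y : Set K) = Set.univ)
    (hji : ∀ a : K, ∃ T : Finset K, (∀ t ∈ T, JoinIrred t) ∧
      ∃ hT : T.Nonempty, T.sup' hT id = a) :
    ∃ S : Finset K, latticeClosure (↑S : Set K) = Set.univ ∧ ∀ y ∈ S, JoinIrred y := by
  classical
  choose T hTji hTne hTsup using hji
  refine ⟨Y.biUnion T, latticeClosure_eq_univ_of_subset hgen fun a ha ↦ ?_, ?_⟩
  · rw [← hTsup a]
    exact isSublattice_latticeClosure.supClosed.finsetSup'_mem (hTne a) fun t ht ↦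
      subset_latticeClosure (Finset.mem_biUnion.mpr ⟨a, ha, ht⟩)
  · intro t ht
    obtain ⟨a, -, hta⟩ := Finset.mem_biUnion.mp ht
    exact hTji a t hta

end

/-- A finitely generated lattice in which every element is a
finite join of join irreducibles is generated by a finite set of join
irreducibles which contains no meet of two of its incomparable members. -/
theorem fg_lattice_generated_by_join_irreducibles
    (K : Type u) [Lattice K] (Y : Finset K)
    (hgen : latticeClosure (↑Y : Set K) = Set.univ)
    (hji : ∀ a : K, ∃ T : Finset K, (∀ t ∈ T, JoinIrred t) ∧
      ∃ hT : T.Nonempty, T.sup' hT id = a) :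
    ∃ Y' : Finset K, latticeClosure (↑Y' : Set K) = Set.univ ∧
      (∀ y ∈ Y', JoinIrred y) ∧
      (∀ y ∈ Y', ∀ z ∈ Y', ¬ y ≤ z → ¬ z ≤ y → y ⊓ z ∉ Y') := by
  obtain ⟨S, hSgen, hSji⟩ := exists_finset_joinIrred_latticeClosure_eq_univ hgen hji
  obtain ⟨S', hS'S, hS'gen, hS'inf⟩ := exists_subset_latticeClosure_eq_inf_notMem S
  exact ⟨S', hS'gen.trans hSgen, fun y hy ↦ hSji y (hS'S hy), hS'inf⟩

end FreeLatticePaper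
end

section
/- Let n ≥ 3, let F be a lattice free on an n-element set, and let K be a finitely generated lattice containing F as an elementary substructure with respect to the first-order language of lattices. If D(K) = K (i.e., K is lower bounded), then K = F; in particular K is isomorphic to the free lattice on n generators. -/
open FirstOrder

namespace FreeLatticePaper

universe u v w u' v'

/-- Function symbols of the language of lattices: two binary symbols. -/
def latFuncs : ℕ → Type := fun n =>
  match n with
  | 2 => Fin 2
  | _ => Empty

/-- The first-order language of lattices: exactly two binary function symbols
(join and meet) and no relation symbols. -/
def latticeLang : FirstOrder.Language := ⟨latFuncs, fun _ => Empty⟩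

/-- Every lattice is a structure for the language of lattices, interpreting the
first binary symbol as join and the second as meet. -/
instance latticeStructure (L : Type*) [Lattice L] : latticeLang.Structure L where
  funMap {n} f x :=
    match n, f with
    | 2, ⟨0, _⟩ => x 0 ⊔ x 1
    | 2, ⟨1, _⟩ => x 0 ⊓ x 1
    | 2, ⟨_ + 2, h⟩ => absurd h (by omega)
    | 0, f => Empty.elim f
    | 1, f => Empty.elim f
    | _ + 3, f => Empty.elim f
  RelMap {n} r _ := Empty.elim r

/-!
Every `D_k(K)` is contained in a set `binaryDset K k` defined through binary join covers only:
`p` belongs to level `k + 1` when each join cover `p ≤ a ⊔ b` is trivial or refined by a join cover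
drawn from level `k`. If `K` is generated by a finite set `Y`, such a `p` is determined by the
elements above it among `Y` and the joins of subsets of level `k`, so every level is finite.
Each level is also defined by a first-order formula whose parameters enumerate the previous level,
and a finite set defined with parameters from an elementary substructure lies inside it. By
induction every level, hence every `D_k(K)`, lies in the image of `F`; as `D(K) = K`, the
elementary embedding is onto, and an elementary embedding of lattices is an order embedding.
-/

open FirstOrder.Language Set

section JoinCovers

variable {K : Type*} [Lattice K]

/-- `p ∈ lowerBounds (upperBounds U)` says `p ≤ ⋁ U`, also when `U = ∅` and the join need not
exist. -/
def binaryRefinableBy (S : Set K) : Set K :=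
  {p | ∀ a b : K, p ≤ a ⊔ b → p ≤ a ∨ p ≤ b ∨
    ∃ U : Finset K, ↑U ⊆ S ∧ (∀ u ∈ U, u ≤ a ∨ u ≤ b) ∧ p ∈ lowerBounds (upperBounds ↑U)}

variable (K) in
def binaryDset : ℕ → Set K
  | 0 => binaryRefinableBy ∅
  | k + 1 => binaryRefinableBy (binaryDset k)

theorem binaryRefinableBy_mono {S T : Set K} (hST : S ⊆ T) :
    binaryRefinableBy S ⊆ binaryRefinableBy T := by
  intro p hp a b hab
  rcases hp a b hab with h | h | ⟨U, hUS, hUab, hpU⟩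
  exacts [Or.inl h, Or.inr (Or.inl h), Or.inr (Or.inr ⟨U, hUS.trans hST, hUab, hpU⟩)]

theorem Dset_zero_subset_binaryRefinableBy (S : Set K) : Dset K 0 ⊆ binaryRefinableBy S := by
  classical
  intro p hp a b hab
  obtain ⟨c, hc, hpc⟩ := (hp : JoinPrimeIn K p) {a, b} (a ⊔ b) (by simpa using isLUB_pair) hab
  rcases Finset.mem_insert.1 hc with rfl | hc
  · exact Or.inl hpc
  · exact Or.inr (Or.inl (Finset.mem_singleton.1 hc ▸ hpc))

theorem Dset_succ_subset_binaryRefinableBy (k : ℕ) :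
    Dset K (k + 1) ⊆ binaryRefinableBy (Dset K k) := by
  classical
  intro p hp a b hab
  by_cases ha : p ≤ a
  · exact Or.inl ha
  by_cases hb : p ≤ b
  · exact Or.inr (Or.inl hb)
  obtain ⟨U, t, hUD, hUab, hUt, hpt⟩ :=
    hp {a, b} (a ⊔ b) (by simpa using isLUB_pair) hab (by simp [ha, hb])
  refine Or.inr (Or.inr ⟨U, hUD, fun u hu => ?_, fun x hx => hpt.trans (hUt.2 hx)⟩)
  simpa using hUab u hu

theorem Dset_subset_binaryDset : ∀ k, Dset K k ⊆ binaryDset K k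
  | 0 => Dset_zero_subset_binaryRefinableBy ∅
  | k + 1 => (Dset_succ_subset_binaryRefinableBy k).trans
      (binaryRefinableBy_mono (Dset_subset_binaryDset k))

end JoinCovers

section Finiteness

variable {K : Type*} [Lattice K]

def JoinCoversFactorThrough (G : Set K) (p : K) : Prop :=
  ∀ a b : K, p ≤ a ⊔ b → p ≤ a ∨ p ≤ b ∨ ∃ g ∈ G, p ≤ g ∧ g ≤ a ⊔ b

variable {Y G : Set K}

theorem JoinCoversFactorThrough.le_of_forall_le_imp_le (hY : latticeClosure Y = univ) {p q : K}
    (hp : JoinCoversFactorThrough G p) (hpq : ∀ g ∈ Y ∪ G, p ≤ g → q ≤ g) : q ≤ p := by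
  suffices ∀ a ∈ latticeClosure Y, p ≤ a → q ≤ a from this p (hY ▸ mem_univ p) le_rfl
  intro a ha
  induction ha using latticeClosure_sup_inf_induction with
  | mem y hy => exact hpq y (Or.inl hy)
  | sup a _ b _ iha ihb =>
    intro hab
    rcases hp a b hab with h | h | ⟨g, hg, hpg, hgab⟩
    exacts [(iha h).trans le_sup_left, (ihb h).trans le_sup_right,
      (hpq g (Or.inr hg) hpg).trans hgab]
  | inf a _ b _ iha ihb =>
    exact fun hab => le_inf (iha (hab.trans inf_le_left)) (ihb (hab.trans inf_le_right))

/-- Such elements are determined by the finitely many members of `Y ∪ G` above them. -/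
theorem finite_setOf_joinCoversFactorThrough (hY : latticeClosure Y = univ) (hYfin : Y.Finite)
    (hG : G.Finite) : {p | JoinCoversFactorThrough G p}.Finite := by
  refine Finite.of_finite_image (f := fun p => (Y ∪ G) ∩ Ici p)
    ((hYfin.union hG).finite_subsets.subset ?_) fun p hp q hq hpq => ?_
  · rintro _ ⟨p, -, rfl⟩
    exact inter_subset_left
  · exact le_antisymm (hq.le_of_forall_le_imp_le hY fun g hg hqg => (hpq.symm.subset ⟨hg, hqg⟩).2)
      (hp.le_of_forall_le_imp_le hY fun g hg hpg => (hpq.subset ⟨hg, hpg⟩).2)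

theorem finite_setOf_isLUB_of_subset {α : Type*} [PartialOrder α] {S : Set α} (hS : S.Finite) :
    {x | ∃ T ⊆ S, IsLUB T x}.Finite := by
  have hunion : {x | ∃ T ⊆ S, IsLUB T x} = ⋃ T ∈ {T | T ⊆ S}, {x | IsLUB T x} := by
    ext; simp
  rw [hunion]
  exact hS.finite_subsets.biUnion fun T _ =>
    Subsingleton.finite fun x hx y hy => IsLUB.unique hx hy

theorem joinCoversFactorThrough_of_mem_binaryRefinableBy {S : Set K} {p : K}
    (hp : p ∈ binaryRefinableBy S) : JoinCoversFactorThrough {x | ∃ T ⊆ S, IsLUB T x} p := by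
  intro a b hab
  rcases hp a b hab with h | h | ⟨U, hUS, hUab, hpU⟩
  · exact Or.inl h
  · exact Or.inr (Or.inl h)
  rcases U.eq_empty_or_nonempty with rfl | hU
  · exact Or.inl (hpU (by simp))
  have hlub := Finset.isLUB_sup' hU
  refine Or.inr (Or.inr ⟨_, ⟨U, hUS, hlub⟩, hpU hlub.1, hlub.2 fun u hu => ?_⟩)
  rcases hUab u hu with h | h
  exacts [h.trans le_sup_left, h.trans le_sup_right]

theorem binaryRefinableBy_finite (hY : latticeClosure Y = univ) (hYfin : Y.Finite) {S : Set K}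
    (hS : S.Finite) : (binaryRefinableBy S).Finite :=
  (finite_setOf_joinCoversFactorThrough hY hYfin (finite_setOf_isLUB_of_subset hS)).subset
    fun _ => joinCoversFactorThrough_of_mem_binaryRefinableBy

theorem binaryDset_finite (hY : latticeClosure Y = univ) (hYfin : Y.Finite) :
    ∀ k, (binaryDset K k).Finite
  | 0 => binaryRefinableBy_finite hY hYfin finite_empty
  | k + 1 => binaryRefinableBy_finite hY hYfin (binaryDset_finite hY hYfin k)

end Finiteness

section Formulas

variable {K : Type*} [Lattice K]

def joinSymbol : latticeLang.Functions 2 := (0 : Fin 2)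

def joinTerm {α : Type*} (s t : latticeLang.Term α) : latticeLang.Term α :=
  Term.func joinSymbol ![s, t]

def leFormula {α : Type*} (s t : latticeLang.Term α) : latticeLang.Formula α :=
  (joinTerm s t).equal t

@[simp]
theorem realize_joinTerm {α : Type*} (v : α → K) (s t : latticeLang.Term α) :
    (joinTerm s t).realize v = s.realize v ⊔ t.realize v :=
  rfl

@[simp]
theorem realize_leFormula {α : Type*} (v : α → K) (s t : latticeLang.Term α) :
    (leFormula s t).Realize v ↔ s.realize v ≤ t.realize v := by
  rw [leFormula, Formula.realize_equal, realize_joinTerm, sup_eq_right]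

/-- Defines `binaryRefinableBy (range d)` for `d : Fin N → K`: the variables `Sum.inl i` are the
parameters `d i` and `Sum.inr 0` is the defined element; the two bound variables are the cover
`a ⊔ b`, and the innermost one is an upper bound of the refining cover indexed by `U`. -/
noncomputable def binaryRefinableFormula (N : ℕ) : latticeLang.Formula (Fin N ⊕ Fin 1) :=
  Formula.iAlls (Fin 2) <|
    (leFormula (var (Sum.inl (Sum.inr 0))) (joinTerm (var (Sum.inr 0)) (var (Sum.inr 1)))).imp <|
      leFormula (var (Sum.inl (Sum.inr 0))) (var (Sum.inr 0)) ⊔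
      leFormula (var (Sum.inl (Sum.inr 0))) (var (Sum.inr 1)) ⊔
      Formula.iSup fun U : Finset (Fin N) =>
        (Formula.iInf fun i : U =>
          leFormula (var (Sum.inl (Sum.inl i.1))) (var (Sum.inr 0)) ⊔
          leFormula (var (Sum.inl (Sum.inl i.1))) (var (Sum.inr 1))) ⊓
        Formula.iAlls (Fin 1)
          ((Formula.iInf fun i : U =>
              leFormula (var (Sum.inl (Sum.inl (Sum.inl i.1)))) (var (Sum.inr 0))).imp
            (leFormula (var (Sum.inl (Sum.inl (Sum.inr 0)))) (var (Sum.inr 0))))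

theorem realize_binaryRefinableFormula {N : ℕ} (d : Fin N → K) (x : K) :
    (binaryRefinableFormula N).Realize (Sum.elim d fun _ => x) ↔
      x ∈ binaryRefinableBy (range d) := by
  classical
  simp only [binaryRefinableFormula, Formula.realize_iAlls, Formula.realize_imp,
    Formula.realize_sup, Formula.realize_inf, Formula.realize_iSup, Formula.realize_iInf,
    realize_leFormula, realize_joinTerm, Term.realize_var, Sum.elim_inl, Sum.elim_inr,
    Subtype.forall]
  constructor
  · intro h a b hab
    rcases h ![a, b] hab with (hxa | hxb) | ⟨U, hUab, hxU⟩
    · exact Or.inl hxa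
    · exact Or.inr (Or.inl hxb)
    refine Or.inr (Or.inr ⟨U.image d, by rw [Finset.coe_image]; exact image_subset_range d _,
      by simpa using hUab,
      fun t ht => hxU (fun _ => t) fun i hi => ht (Finset.mem_image_of_mem d hi)⟩)
  · intro h v hv
    rcases h (v 0) (v 1) hv with hxa | hxb | ⟨U, hUd, hUab, hxU⟩
    · exact Or.inl (Or.inl hxa)
    · exact Or.inl (Or.inr hxb)
    refine Or.inr ⟨Finset.univ.filter (d · ∈ U), fun i hi => hUab _ (Finset.mem_filter.1 hi).2,
      fun t ht => hxU fun u hu => ?_⟩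
    obtain ⟨i, rfl⟩ := hUd hu
    exact ht i (Finset.mem_filter.2 ⟨Finset.mem_univ i, hu⟩)

end Formulas

section Transfer

variable {L : Language} {M N : Type*} [L.Structure M] [L.Structure N]

/-- Every realization of `φ` (in its last variable) is one of the last `m` free variables. -/
noncomputable def realizationsAmong {n : ℕ} (φ : L.Formula (Fin n ⊕ Fin 1)) (m : ℕ) :
    L.Formula (Fin n ⊕ Fin m) :=
  Formula.iAlls (Fin 1) <| (φ.relabel (Sum.map Sum.inl id)).imp <|
    Formula.iSup fun j : Fin m => (var (Sum.inr 0)).equal (var (Sum.inl (Sum.inr j)))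

theorem realize_realizationsAmong {n m : ℕ} (φ : L.Formula (Fin n ⊕ Fin 1)) (c : Fin n → N)
    (w : Fin m → N) :
    (realizationsAmong φ m).Realize (Sum.elim c w) ↔
      ∀ x, φ.Realize (Sum.elim c fun _ => x) → ∃ j, x = w j := by
  simp only [realizationsAmong, Formula.realize_iAlls, Formula.realize_imp,
    Formula.realize_relabel, Formula.realize_iSup, Formula.realize_equal, Term.realize_var,
    Sum.elim_comp_map, Sum.elim_comp_inl, Sum.elim_inl, Sum.elim_inr, Function.comp_id]
  refine ⟨fun h x hx => h (fun _ => x) hx, fun h v hv => ?_⟩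
  rw [show v = fun _ => v 0 from funext fun i => congrArg v (Subsingleton.elim i 0)] at hv
  exact h (v 0) hv

/-- `N` says that the realizations of `φ` are among `m` given elements; this transfers down to `M`,
and back up with the `m` elements now taken from `M`. -/
theorem _root_.FirstOrder.Language.ElementaryEmbedding.subset_range_of_finite_of_defined
    (e : M ↪ₑ[L] N) {n : ℕ} (φ : L.Formula (Fin n ⊕ Fin 1)) (c : Fin n → M) {S : Set N}
    (hS : S.Finite)
    (hφ : ∀ x, φ.Realize (Sum.elim (e ∘ c) fun _ => x) ↔ x ∈ S) : S ⊆ range e := by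
  obtain ⟨m, w, rfl⟩ := hS.fin_embedding
  have hN : (Formula.iExs (Fin m) (realizationsAmong φ m)).Realize (e ∘ c) :=
    Formula.realize_iExs.2 ⟨w, (realize_realizationsAmong φ _ _).2 fun x hx =>
      ((hφ x).1 hx).imp fun _ => Eq.symm⟩
  obtain ⟨w', hw'⟩ := Formula.realize_iExs.1 ((e.map_formula _ c).1 hN)
  have hN' := (e.map_formula (realizationsAmong φ m) (Sum.elim c w')).2 hw'
  rw [Sum.comp_elim, realize_realizationsAmong] at hN'
  rintro _ ⟨i, rfl⟩
  obtain ⟨j, hj⟩ := hN' (w i) ((hφ _).2 (mem_range_self i))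
  exact ⟨w' j, hj.symm⟩

end Transfer

section ElementaryExtension

variable {F K : Type*} [Lattice F] [Lattice K]

theorem binaryRefinableBy_subset_range (e : latticeLang.ElementaryEmbedding F K) {S : Set K}
    (hS : S.Finite) (hSe : S ⊆ range e) (hfin : (binaryRefinableBy S).Finite) :
    binaryRefinableBy S ⊆ range e := by
  obtain ⟨n, d, rfl⟩ := hS.fin_embedding
  choose c hc using fun i => hSe (mem_range_self i)
  refine e.subset_range_of_finite_of_defined (binaryRefinableFormula n) c hfin fun x => ?_
  rw [show e ∘ c = d from funext hc]
  exact realize_binaryRefinableFormula d x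

theorem binaryDset_subset_range (e : latticeLang.ElementaryEmbedding F K) {Y : Set K}
    (hY : latticeClosure Y = univ) (hYfin : Y.Finite) : ∀ k, binaryDset K k ⊆ range e
  | 0 => binaryRefinableBy_subset_range e finite_empty (empty_subset _)
      (binaryDset_finite hY hYfin 0)
  | k + 1 => binaryRefinableBy_subset_range e (binaryDset_finite hY hYfin k)
      (binaryDset_subset_range e hY hYfin k) (binaryDset_finite hY hYfin (k + 1))

theorem surjective_of_DFull_eq_univ (e : latticeLang.ElementaryEmbedding F K) {Y : Set K}
    (hY : latticeClosure Y = univ) (hYfin : Y.Finite) (hlb : DFull K = univ) :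
    Function.Surjective e := by
  intro x
  obtain ⟨k, hk⟩ := mem_iUnion.1 (hlb ▸ mem_univ x : x ∈ DFull K)
  exact binaryDset_subset_range e hY hYfin k (Dset_subset_binaryDset k hk)

theorem elementaryEmbedding_map_sup (e : latticeLang.ElementaryEmbedding F K) (a b : F) :
    e (a ⊔ b) = e a ⊔ e b :=
  e.map_fun joinSymbol ![a, b]

def orderEmbeddingOfElementaryEmbedding (e : latticeLang.ElementaryEmbedding F K) : F ↪o K :=
  OrderEmbedding.ofMapLEIff e fun a b => by
    rw [← sup_eq_right, ← elementaryEmbedding_map_sup, e.injective.eq_iff, sup_eq_right]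

end ElementaryExtension

theorem lower_bounded_elementary_extension_of_free_is_free_general
    (F : Type u) [Lattice F]
    (K : Type u') [Lattice K]
    (hfg : ∃ Y : Finset K, latticeClosure (↑Y : Set K) = Set.univ)
    (e : latticeLang.ElementaryEmbedding F K)
    (hlb : DFull K = Set.univ) :
    Function.Surjective e ∧ Nonempty (F ≃o K) := by
  obtain ⟨Y, hY⟩ := hfg
  have hsurj := surjective_of_DFull_eq_univ e hY Y.finite_toSet hlb
  exact ⟨hsurj, ⟨OrderIso.ofSurjective (orderEmbeddingOfElementaryEmbedding e) hsurj⟩⟩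

/-- If a finitely generated lattice `K` contains a free
lattice `F` on `n ≥ 3` generators as an elementary substructure (here: via an
elementary embedding `e`) and `D(K) = K` (i.e. `K` is lower bounded), then
`K = F`, i.e. the elementary embedding is onto; in particular `K` is isomorphic
to the free lattice on `n` generators. -/
theorem lower_bounded_elementary_extension_of_free_is_free
    (n : ℕ) (hn : 3 ≤ n) (F : Type u) [Lattice F] (X : Set F)
    (hX : X.ncard = n) (hfree : IsFreeOn F X)
    (K : Type u') [Lattice K]
    (hfg : ∃ Y : Finset K, latticeClosure (↑Y : Set K) = Set.univ)
    (e : latticeLang.ElementaryEmbedding F K)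
    (hlb : DFull K = Set.univ) :
    Function.Surjective e ∧ Nonempty (F ≃o K) :=
  lower_bounded_elementary_extension_of_free_is_free_general F K hfg e hlb

end FreeLatticePaper
end
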